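/- For every R > 0, the mean of the exit-time density of the 1-ball equals R²: ∫_0^∞ t · f₁^exit(t) dt = R², consistent with the expected exit time R²/n of a standard n-dimensional Brownian motion from the ball of radius R for n = 1. -/

import Mathlib

/-!
Expanding the density as a series of exponentials, each `t ↦ t * exp (-b * t)` integrates to
`1 / b ^ 2` over `(0, ∞)`. For `b = (2k+1)²π²/(8R²)` the integrals of the absolute values are of
order `(2k+1)⁻³`, so the series may be integrated term by term, leaving
`(π / (2R²)) * (64R⁴/π⁴) * ∑ (-1)ᵏ/(2k+1)³`. The last sum is Dirichlet's `β(3) = π³/32`, the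
`L`-value of the nontrivial character mod 4.
-/

open Real Filter Topology MeasureTheory

/-- Exit-time density of a standard Brownian motion started at the center of
`(-R, R)` and killed at `±R`. -/
noncomputable def f₁exit (R t : ℝ) : ℝ :=
  (π / (2 * R ^ 2)) * ∑' k : ℕ, (-1 : ℝ) ^ k * (2 * (k : ℝ) + 1) *
    Real.exp (-((2 * (k : ℝ) + 1) ^ 2 * π ^ 2 * t) / (8 * R ^ 2))

open Set

lemma integral_mul_exp_neg_mul_Ioi {b : ℝ} (hb : 0 < b) :
    ∫ t in Ioi (0 : ℝ), t * exp (-(b * t)) = 1 / b ^ 2 := by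
  have h := integral_rpow_mul_exp_neg_mul_Ioi two_pos hb
  norm_num [Real.Gamma_two] at h
  simpa [rpow_two] using h

lemma integrableOn_mul_exp_neg_mul_Ioi {b : ℝ} (hb : 0 < b) :
    IntegrableOn (fun t => t * exp (-(b * t))) (Ioi 0) :=
  Integrable.of_integral_ne_zero (by rw [integral_mul_exp_neg_mul_Ioi hb]; positivity)

lemma integral_mul_tsum_mul_exp_neg_mul_Ioi {a b : ℕ → ℝ} (hb : ∀ k, 0 < b k)
    (hab : Summable fun k => |a k| / b k ^ 2) :
    ∫ t in Ioi (0 : ℝ), t * ∑' k, a k * exp (-(b k * t)) = ∑' k, a k / b k ^ 2 := by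
  have hint (k : ℕ) : IntegrableOn (fun t => a k * (t * exp (-(b k * t)))) (Ioi 0) :=
    (integrableOn_mul_exp_neg_mul_Ioi (hb k)).const_mul _
  have hnorm (k : ℕ) : ∫ t in Ioi (0 : ℝ), ‖a k * (t * exp (-(b k * t)))‖ = |a k| / b k ^ 2 := by
    rw [setIntegral_congr_fun measurableSet_Ioi fun t (ht : 0 < t) => by
        rw [norm_mul, norm_eq_abs, norm_of_nonneg (mul_nonneg ht.le (exp_pos _).le)],
      integral_const_mul, integral_mul_exp_neg_mul_Ioi (hb k), mul_one_div]
  calc ∫ t in Ioi (0 : ℝ), t * ∑' k, a k * exp (-(b k * t))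
      = ∫ t in Ioi (0 : ℝ), ∑' k, a k * (t * exp (-(b k * t))) := by
        simp only [← tsum_mul_left, mul_left_comm]
    _ = ∑' k, ∫ t in Ioi (0 : ℝ), a k * (t * exp (-(b k * t))) :=
        (integral_tsum_of_summable_integral_norm hint (by simpa only [hnorm] using hab)).symm
    _ = ∑' k, a k / b k ^ 2 := by
        simp only [integral_const_mul, integral_mul_exp_neg_mul_Ioi (hb _), mul_one_div]

lemma Nat.two_mul_add_one_injective : Function.Injective fun k : ℕ => 2 * k + 1 :=
  fun _ _ h => by simpa using h

lemma summable_inv_odd_pow {p : ℕ} (hp : 1 < p) :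
    Summable fun k : ℕ => ((2 * (k : ℝ) + 1) ^ p)⁻¹ := by
  simpa [Function.comp_def] using (Real.summable_nat_pow_inv.mpr hp).comp_injective Nat.two_mul_add_one_injective

lemma hasSum_neg_one_pow_div_odd_cube :
    HasSum (fun k : ℕ => (-1 : ℝ) ^ k / (2 * (k : ℝ) + 1) ^ 3) (π ^ 3 / 32) := by
  have h := hasSum_L_function_mod_four_eval_three
  rw [← Nat.two_mul_add_one_injective.hasSum_iff] at h
  · refine h.congr_fun fun k => ?_
    have : π * ((2 * k + 1 : ℕ) : ℝ) / 2 = π / 2 + k * π := by push_cast; ring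
    simp only [Function.comp_apply, this, sin_add_nat_mul_pi, sin_pi_div_two]
    push_cast
    ring
  · rintro n hn
    obtain ⟨m, rfl⟩ : Even n := by simpa [Nat.odd_iff, Nat.even_iff] using hn
    have : π * ((m + m : ℕ) : ℝ) / 2 = m * π := by push_cast; ring
    rw [this, sin_nat_mul_pi, mul_zero]

/-- The mean of the exit-time density of the 1-ball equals `R²`:
`∫_0^∞ t f₁^exit(t) dt = R²`. -/
theorem f₁exit_mean_eq_R_sq (R : ℝ) (hR : 0 < R) :
    ∫ t in Set.Ioi (0 : ℝ), t * f₁exit R t = R ^ 2 := by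
  set a : ℕ → ℝ := fun k => (-1) ^ k * (2 * k + 1)
  set b : ℕ → ℝ := fun k => (2 * k + 1) ^ 2 * π ^ 2 / (8 * R ^ 2)
  have hb (k : ℕ) : 0 < b k := by positivity
  have hf (t : ℝ) : f₁exit R t = π / (2 * R ^ 2) * ∑' k, a k * exp (-(b k * t)) := by
    simp only [f₁exit, a, b, neg_div, mul_div_right_comm]
  have hab (k : ℕ) : a k / b k ^ 2 = 64 * R ^ 4 / π ^ 4 * ((-1) ^ k / (2 * k + 1) ^ 3) := by
    simp only [a, b]
    field_simp
    ring
  have habs (k : ℕ) : |a k| / b k ^ 2 = 64 * R ^ 4 / π ^ 4 * ((2 * (k : ℝ) + 1) ^ 3)⁻¹ := by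
    simp only [a, b, abs_mul, abs_pow, abs_neg, abs_one, one_pow, one_mul]
    rw [abs_of_pos (by positivity)]
    field_simp
    ring
  have hsum : Summable fun k => |a k| / b k ^ 2 := by
    simpa only [habs] using (summable_inv_odd_pow (by norm_num)).mul_left _
  simp only [hf, mul_left_comm _ (π / _), integral_const_mul,
    integral_mul_tsum_mul_exp_neg_mul_Ioi hb hsum, hab, tsum_mul_left,
    hasSum_neg_one_pow_div_odd_cube.tsum_eq]
  field_simp
  ring
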